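/- arXiv:1709.03398 — 2 statements merged into one kernel-verified Lean document; each statement's English description precedes it below -/
import Mathlib

section
/- With g(x) := f(x/2,(x+1)/2)/(x+1) and f(a,b) := ∏_{n≥1} ((n+a)/(n+b))^{(-1)^{t_n}}, one has g(1/2) = 1 and g(1) = √2/2. -/
open Filter Finset Topology

/-- The Thue–Morse sequence: sum modulo 2 of the binary digits of `n`. -/
def tm (n : ℕ) : ℕ := (Nat.digits 2 n).sum % 2

/-- Partial products of `f(a,b) = ∏_{n ≥ 1} ((n+a)/(n+b))^{(-1)^{t_n}}`. -/
noncomputable def fPartial (a b : ℂ) (N : ℕ) : ℂ :=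
  ∏ n ∈ Finset.range N,
    ((((n : ℂ) + 1) + a) / (((n : ℂ) + 1) + b)) ^ ((-1 : ℤ) ^ tm (n + 1))

/-!
Write `P`, `S`, `Q` for the partial products of `f(1/2,1)`, `f(1/4,3/4)`, `f(0,1)`. Since
`t_{2k} = t_k` and `t_{2k+1} = 1 - t_k`, a partial product of odd length `2N+1` is, up to its
first factor, a partial product of length `N` of the quotients of consecutive factors. This gives
`P_{2N+1} P_N = (4/3) S_N` and `Q_{2N+1} = 2 W_N`, where `W` is the Thue–Morse product of the
Wallis factors `1 - 1/(2k+1)^2`; moreover `Q_N = W_N P_N^2` factor by factor. The product `W`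
converges to some `L > 0` because `∑ 1/(2k+1)^2 < ∞`, so in the limit `2L = L P^2`, i.e.
`f(1/2,1) = √2`, and then `f(1/4,3/4) = (3/4) f(1/2,1)^2 = 3/2`.
-/

def tmSign (n : ℕ) : ℤ := (-1) ^ tm n

lemma tmSign_eq_neg_one_pow_digits_sum (n : ℕ) : tmSign n = (-1) ^ (Nat.digits 2 n).sum := by
  rw [tmSign, tm, ← neg_one_pow_eq_pow_mod_two]

lemma tmSign_add_two_mul (x k : ℕ) (hx : x < 2) (hxk : x ≠ 0 ∨ k ≠ 0) :
    tmSign (x + 2 * k) = (-1) ^ x * tmSign k := by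
  rw [tmSign_eq_neg_one_pow_digits_sum, tmSign_eq_neg_one_pow_digits_sum,
    Nat.digits_add 2 one_lt_two x k hx hxk, List.sum_cons, pow_add]

@[simp] lemma tmSign_zero : tmSign 0 = 1 := by simp [tmSign, tm]

lemma tmSign_two_mul (k : ℕ) : tmSign (2 * k) = tmSign k := by
  rcases eq_or_ne k 0 with rfl | hk
  · rfl
  · simpa using tmSign_add_two_mul 0 k zero_lt_two (Or.inr hk)

lemma tmSign_two_mul_add_one (k : ℕ) : tmSign (2 * k + 1) = -tmSign k := by
  simpa [add_comm] using tmSign_add_two_mul 1 k one_lt_two (Or.inl one_ne_zero)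

lemma tmSign_one : tmSign 1 = -1 := by simpa using tmSign_two_mul_add_one 0

lemma abs_tmSign (n : ℕ) : |tmSign n| = 1 := abs_neg_one_pow _

section Field

variable {K : Type*} [Field K]

def tmProd (h : ℕ → K) (N : ℕ) : K := ∏ n ∈ range N, h (n + 1) ^ tmSign (n + 1)

lemma tmProd_succ (h : ℕ → K) (N : ℕ) :
    tmProd h (N + 1) = tmProd h N * h (N + 1) ^ tmSign (N + 1) :=
  prod_range_succ _ _

lemma tmProd_mul (h g : ℕ → K) (N : ℕ) : tmProd (h * g) N = tmProd h N * tmProd g N := by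
  simp only [tmProd, Pi.mul_apply, mul_zpow, prod_mul_distrib]

lemma tmProd_div (h g : ℕ → K) (N : ℕ) : tmProd (h / g) N = tmProd h N / tmProd g N := by
  simp only [tmProd, Pi.div_apply, div_zpow, prod_div_distrib]

lemma tmProd_two_mul_add_one (h : ℕ → K) (N : ℕ) :
    tmProd h (2 * N + 1) = (h 1)⁻¹ * tmProd (fun k => h (2 * k) / h (2 * k + 1)) N := by
  induction N with
  | zero => simp [tmProd, tmSign_one]
  | succ N ih =>
    rw [show 2 * (N + 1) + 1 = 2 * N + 1 + 1 + 1 by ring, tmProd_succ, tmProd_succ, ih,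
      tmProd_succ, show 2 * N + 1 + 1 = 2 * (N + 1) by ring, tmSign_two_mul,
      tmSign_two_mul_add_one, div_zpow, zpow_neg]
    ring

end Field

lemma tmProd_pos {h : ℕ → ℝ} (hpos : ∀ n, 0 < h (n + 1)) (N : ℕ) : 0 < tmProd h N :=
  prod_pos fun n _ => zpow_pos (hpos n) _

lemma exists_tendsto_tmProd_of_summable_log {h : ℕ → ℝ} (hpos : ∀ n, 0 < h (n + 1))
    (hlog : Summable fun n => Real.log (h (n + 1))) :
    ∃ L, 0 < L ∧ Tendsto (tmProd h) atTop (𝓝 L) := by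
  have hsum : Summable fun n => Real.log (h (n + 1) ^ tmSign (n + 1)) := by
    refine hlog.norm.of_norm_bounded fun n => ?_
    rw [Real.log_zpow, norm_mul, Real.norm_eq_abs (_ : ℝ), ← Int.cast_abs, abs_tmSign,
      Int.cast_one, one_mul]
  exact ⟨_, Real.exp_pos _,
    (Real.hasProd_of_hasSum_log (fun n => zpow_pos (hpos n) _) hsum.hasSum).tendsto_prod_nat⟩

lemma exists_ofReal_eq_of_tendsto {α : Type*} {l : Filter α} [l.NeBot] {u : α → ℝ} {z : ℂ}
    (h : Tendsto (fun n => (u n : ℂ)) l (𝓝 z)) :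
    ∃ x : ℝ, (x : ℂ) = z ∧ Tendsto u l (𝓝 x) := by
  have hre : Tendsto u l (𝓝 z.re) := by
    simpa [Function.comp_def] using (Complex.continuous_re.tendsto z).comp h
  exact ⟨z.re, tendsto_nhds_unique (tendsto_ofReal_iff.mpr hre) h, hre⟩

noncomputable def ratio (a b : ℝ) (m : ℕ) : ℝ := (m + a) / (m + b)

lemma fPartial_ofReal (a b : ℝ) :
    fPartial a b = fun N => ((tmProd (ratio a b) N : ℝ) : ℂ) := by
  funext N
  simp [fPartial, tmProd, ratio, tmSign]

lemma tendsto_two_mul_add_one_atTop : Tendsto (fun N : ℕ => 2 * N + 1) atTop atTop :=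
  StrictMono.tendsto_atTop fun _ _ h => by omega

lemma ratio_pos {a b : ℝ} (ha : 0 < a) (hb : 0 < b) (m : ℕ) : 0 < ratio a b m := by
  unfold ratio; positivity

lemma tmProd_ratio_half_one_two_mul_add_one (N : ℕ) :
    tmProd (ratio (1 / 2) 1) (2 * N + 1) * tmProd (ratio (1 / 2) 1) N =
      4 / 3 * tmProd (ratio (1 / 4) (3 / 4)) N := by
  have hpair : (fun k => ratio (1 / 2) 1 (2 * k) / ratio (1 / 2) 1 (2 * k + 1)) =
      ratio (1 / 4) (3 / 4) / ratio (1 / 2) 1 := by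
    funext k
    simp only [ratio, Pi.div_apply]
    push_cast
    field_simp
    ring
  have hP : tmProd (ratio (1 / 2) 1) N ≠ 0 :=
    (tmProd_pos (fun n => ratio_pos (by norm_num) one_pos _) N).ne'
  have hp1 : ratio (1 / 2) 1 1 = 3 / 4 := by norm_num [ratio]
  rw [tmProd_two_mul_add_one, hpair, tmProd_div, hp1]
  field_simp

/-- The factor `2k(2k+2)/(2k+1)^2 = 1 - 1/(2k+1)^2` of Wallis' product. -/
noncomputable def wallisFactor (k : ℕ) : ℝ := ratio 0 1 (2 * k) / ratio 0 1 (2 * k + 1)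

lemma wallisFactor_mul_ratio_half_one_sq :
    wallisFactor * ratio (1 / 2) 1 * ratio (1 / 2) 1 = ratio 0 1 := by
  funext k
  simp only [wallisFactor, ratio, Pi.mul_apply]
  push_cast
  field_simp
  ring

lemma exists_tendsto_tmProd_wallisFactor :
    ∃ L, 0 < L ∧ Tendsto (tmProd wallisFactor) atTop (𝓝 L) := by
  refine exists_tendsto_tmProd_of_summable_log (fun n => ?_) ?_
  · unfold wallisFactor ratio; positivity
  · have hinj : Function.Injective fun n : ℕ => 2 * n + 3 := fun _ _ h => by simp at h; omega
    have hsum := ((Real.summable_one_div_nat_pow.mpr one_lt_two).comp_injective hinj).neg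
    refine (Real.summable_log_one_add_of_summable hsum).congr fun n => ?_
    simp only [wallisFactor, ratio, Function.comp_apply]
    push_cast
    congr 1
    field_simp
    ring

lemma sq_eq_two_of_tendsto_tmProd_ratio_half_one {β : ℝ}
    (hβ : Tendsto (tmProd (ratio (1 / 2) 1)) atTop (𝓝 β)) : β ^ 2 = 2 := by
  obtain ⟨L, hL, hW⟩ := exists_tendsto_tmProd_wallisFactor
  have hQ : Tendsto (tmProd (ratio 0 1)) atTop (𝓝 (L * β * β)) := by
    rw [← wallisFactor_mul_ratio_half_one_sq]
    refine ((hW.mul hβ).mul hβ).congr fun N => ?_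
    rw [tmProd_mul, tmProd_mul]
  have hQ_odd : Tendsto (fun N => tmProd (ratio 0 1) (2 * N + 1)) atTop (𝓝 (2 * L)) := by
    have hq1 : ratio 0 1 1 = 1 / 2 := by norm_num [ratio]
    refine (hW.const_mul 2).congr fun N => ?_
    rw [tmProd_two_mul_add_one, hq1, one_div, inv_inv]
    rfl
  have hL2 : L * β * β = 2 * L :=
    tendsto_nhds_unique (hQ.comp tendsto_two_mul_add_one_atTop) hQ_odd
  nlinarith

/-- `g(1/2) = 1` and `g(1) = √2/2`, where `g(x) = f(x/2,(x+1)/2)/(x+1)`. -/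
theorem g_half_and_g_one (A B : ℂ)
    (hA : Tendsto (fPartial ((1 / 2 : ℂ) / 2) (((1 / 2 : ℂ) + 1) / 2)) atTop (𝓝 A))
    (hB : Tendsto (fPartial ((1 : ℂ) / 2) (((1 : ℂ) + 1) / 2)) atTop (𝓝 B)) :
    A / ((1 / 2 : ℂ) + 1) = 1 ∧ B / ((1 : ℂ) + 1) = (Real.sqrt 2 : ℂ) / 2 := by
  rw [show (1 / 2 : ℂ) / 2 = ((1 / 4 : ℝ) : ℂ) by push_cast; ring,
    show ((1 / 2 : ℂ) + 1) / 2 = ((3 / 4 : ℝ) : ℂ) by push_cast; ring, fPartial_ofReal] at hA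
  rw [show (1 : ℂ) / 2 = ((1 / 2 : ℝ) : ℂ) by push_cast; ring,
    show ((1 : ℂ) + 1) / 2 = ((1 : ℝ) : ℂ) by push_cast; ring, fPartial_ofReal] at hB
  obtain ⟨α, rfl, hα⟩ := exists_ofReal_eq_of_tendsto hA
  obtain ⟨β, rfl, hβ⟩ := exists_ofReal_eq_of_tendsto hB
  have hβ_sq : β ^ 2 = 2 := sq_eq_two_of_tendsto_tmProd_ratio_half_one hβ
  have hβ_nonneg : 0 ≤ β :=
    ge_of_tendsto' hβ fun N => (tmProd_pos (fun n => ratio_pos (by norm_num) one_pos _) N).le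
  have hα_eq : α = 3 / 2 := by
    have hlim := tendsto_nhds_unique ((hβ.comp tendsto_two_mul_add_one_atTop).mul hβ)
      ((hα.const_mul (4 / 3)).congr fun N => (tmProd_ratio_half_one_two_mul_add_one N).symm)
    nlinarith
  have hβ_eq : β = Real.sqrt 2 := by rw [← hβ_sq, Real.sqrt_sq hβ_nonneg]
  rw [hα_eq, hβ_eq]
  constructor <;> norm_num
end

section
/- For all a, b ∈ ℂ \ {-1,-2,-3,...}, ∏_{n≥1} [((n+a)(2n+a+1)(2n+b)) / ((2n+a)(n+b)(2n+b+1))]^{(-1)^{t_n}} = (b+1)/(a+1). -/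
/-!
Write `tmRatio a b n = ((n + a) / (n + b)) ^ (-1) ^ tₙ`. Since `t₂ₙ = tₙ` and `t₂ₙ₊₁ = 1 - tₙ`,
the `n`-th factor equals `tmRatio n / (tmRatio (2n) * tmRatio (2n+1))`, so the partial product
up to `N` is `(tmRatio 1 ⋯ tmRatio N) / (tmRatio 2 ⋯ tmRatio (2N+1))`. The products
`tmRatio 2 ⋯ tmRatio M` converge to a nonzero limit: `tmRatio n → 1`, and each pair
`tmRatio (2m) * tmRatio (2m+1)` is `1 + O(1/m²)`. Hence the quotient tends to
`tmRatio 1 = (b + 1) / (a + 1)`.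
-/

open Filter Finset Topology

lemma tm_two_mul (n : ℕ) : tm (2 * n) = tm n := by
  rcases Nat.eq_zero_or_pos n with rfl | hn
  · rfl
  · simp [tm, Nat.digits_def' one_lt_two (by omega : 0 < 2 * n)]

lemma tm_two_mul_add_one (n : ℕ) : tm (2 * n + 1) = (tm n + 1) % 2 := by
  simp [tm, Nat.mul_add_div, add_comm 1]

lemma neg_one_pow_tm_two_mul (n : ℕ) : (-1 : ℤ) ^ tm (2 * n) = (-1) ^ tm n := by
  rw [tm_two_mul]

lemma neg_one_pow_tm_two_mul_add_one (n : ℕ) :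
    (-1 : ℤ) ^ tm (2 * n + 1) = -(-1) ^ tm n := by
  rw [tm_two_mul_add_one, ← neg_one_pow_eq_pow_mod_two, pow_succ, mul_neg_one]

lemma prod_range_two_mul {M : Type*} [CommMonoid M] (f : ℕ → M) (N : ℕ) :
    ∏ j ∈ range (2 * N), f j = ∏ n ∈ range N, f (2 * n) * f (2 * n + 1) := by
  induction N with
  | zero => simp
  | succ N ih => rw [mul_add_one, prod_range_succ, prod_range_succ, prod_range_succ, ih, mul_assoc]

section Field

variable {K : Type*} [Field K]

noncomputable def tmRatio (a b : K) (n : ℕ) : K :=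
  (((n : K) + a) / ((n : K) + b)) ^ ((-1 : ℤ) ^ tm n)

lemma tmRatio_one (a b : K) : tmRatio a b 1 = (b + 1) / (a + 1) := by
  have : tm 1 = 1 := rfl
  simp [tmRatio, this, add_comm]

lemma tmRatio_ne_zero {a b : K} (ha : ∀ k : ℕ, a ≠ -((k : K) + 1))
    (hb : ∀ k : ℕ, b ≠ -((k : K) + 1)) (k : ℕ) : tmRatio a b (k + 1) ≠ 0 := by
  have hka : ((k + 1 : ℕ) : K) + a ≠ 0 := fun h =>
    ha k (by push_cast at h; linear_combination h)
  have hkb : ((k + 1 : ℕ) : K) + b ≠ 0 := fun h =>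
    hb k (by push_cast at h; linear_combination h)
  exact zpow_ne_zero _ (div_ne_zero hka hkb)

lemma tmRatio_two_mul_mul_tmRatio_two_mul_add_one (a b : K) (m : ℕ) :
    tmRatio a b (2 * m) * tmRatio a b (2 * m + 1) =
        ((2 * m : K) + a) / ((2 * m : K) + b) *
          (((2 * m : K) + 1 + b) / ((2 * m : K) + 1 + a)) ∨
      tmRatio a b (2 * m) * tmRatio a b (2 * m + 1) =
        ((2 * m : K) + b) / ((2 * m : K) + a) *
          (((2 * m : K) + 1 + a) / ((2 * m : K) + 1 + b)) := by
  simp only [tmRatio, neg_one_pow_tm_two_mul, neg_one_pow_tm_two_mul_add_one]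
  rcases neg_one_pow_eq_or ℤ (tm m) with h | h <;> simp [h]

lemma tm_factor_eq_tmRatio (a b : K) (m : ℕ) :
    ((((m : K) + a) * (2 * (m : K) + a + 1) * (2 * (m : K) + b)) /
        ((2 * (m : K) + a) * ((m : K) + b) * (2 * (m : K) + b + 1))) ^ ((-1 : ℤ) ^ tm m) =
      tmRatio a b m / (tmRatio a b (2 * m) * tmRatio a b (2 * m + 1)) := by
  simp only [tmRatio, neg_one_pow_tm_two_mul, neg_one_pow_tm_two_mul_add_one, zpow_neg,
    ← inv_zpow, ← mul_zpow, ← div_zpow]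
  congr 1
  push_cast
  simp only [div_eq_mul_inv, mul_inv, inv_inv]
  ring

lemma prod_tm_factor_eq (a b : K) (N : ℕ) :
    ∏ n ∈ range N,
        (((((n : K) + 1) + a) * (2 * ((n : K) + 1) + a + 1) * (2 * ((n : K) + 1) + b)) /
          ((2 * ((n : K) + 1) + a) * (((n : K) + 1) + b) * (2 * ((n : K) + 1) + b + 1)))
          ^ ((-1 : ℤ) ^ tm (n + 1)) =
      (∏ n ∈ range N, tmRatio a b (n + 1)) / ∏ j ∈ range (2 * N), tmRatio a b (j + 2) := by
  rw [prod_range_two_mul, ← prod_div_distrib]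
  refine prod_congr rfl fun n _ => ?_
  rw [← Nat.cast_add_one, tm_factor_eq_tmRatio, mul_add_one, add_right_comm _ 1 2]

end Field

lemma tendsto_of_tendsto_two_mul_of_tendsto_two_mul_add_one {α : Type*} {f : ℕ → α}
    {l : Filter α} (he : Tendsto (fun n => f (2 * n)) atTop l)
    (ho : Tendsto (fun n => f (2 * n + 1)) atTop l) : Tendsto f atTop l := by
  intro s hs
  obtain ⟨N₁, h₁⟩ := mem_atTop_sets.mp (he hs)
  obtain ⟨N₂, h₂⟩ := mem_atTop_sets.mp (ho hs)
  refine mem_atTop_sets.mpr ⟨2 * (N₁ + N₂) + 1, fun n hn => ?_⟩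
  obtain ⟨m, rfl | rfl⟩ := Nat.even_or_odd' n
  · exact h₁ m (by omega)
  · exact h₂ m (by omega)

lemma Filter.Tendsto.zpow_neg_one_pow {α K : Type*} [DivisionRing K] [TopologicalSpace K]
    [ContinuousInv₀ K] {l : Filter α} {f : α → K} (k : α → ℕ) (hf : Tendsto f l (𝓝 1)) :
    Tendsto (fun x => f x ^ ((-1 : ℤ) ^ k x)) l (𝓝 1) := by
  have hinv : Tendsto (fun x => (f x)⁻¹) l (𝓝 1) := by simpa using hf.inv₀ one_ne_zero
  refine tendsto_def.mpr fun s hs => ?_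
  filter_upwards [tendsto_def.mp hf s hs, tendsto_def.mp hinv s hs] with x h₁ h₂
  rcases neg_one_pow_eq_or ℤ (k x) with h | h <;> simpa [h]

lemma exists_tendsto_prod_range_ne_zero {R : Type*} [NormedCommRing R] [NormOneClass R]
    [NormMulClass R] [CompleteSpace R] {u : ℕ → R} (hu : ∀ k, u k ≠ 0)
    (hs : Summable fun k => ‖u k - 1‖) :
    ∃ L ≠ 0, Tendsto (fun K => ∏ k ∈ range K, u k) atTop (𝓝 L) := by
  have h := multipliable_one_add_of_summable hs
  have h0 := tprod_one_add_ne_zero_of_summable (fun k => by simpa using hu k) hs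
  simp only [add_sub_cancel] at h h0
  exact ⟨_, h0, h.hasProd.tendsto_prod_nat⟩

section RCLike

variable {𝕜 : Type*} [RCLike 𝕜]

lemma half_le_norm_natCast_add {c : 𝕜} {n : ℕ} (h : 2 * ‖c‖ ≤ n) :
    (n : ℝ) / 2 ≤ ‖(n : 𝕜) + c‖ := by
  have := norm_sub_norm_le (n : 𝕜) (-c)
  rw [norm_neg, sub_neg_eq_add, RCLike.norm_natCast] at this
  linarith

lemma norm_div_mul_div_sub_one_le {c d : 𝕜} {n : ℕ} (hn : 0 < n) (hc : 2 * ‖c‖ ≤ n)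
    (hd : 2 * ‖d‖ ≤ n) :
    ‖((n : 𝕜) + c) / ((n : 𝕜) + d) * (((n : 𝕜) + 1 + d) / ((n : 𝕜) + 1 + c)) - 1‖ ≤
      4 * ‖c - d‖ / (n : ℝ) ^ 2 := by
  have hn' : (0 : ℝ) < n := by exact_mod_cast hn
  have hd' := half_le_norm_natCast_add hd
  have hc' : (n : ℝ) / 2 ≤ ‖(n : 𝕜) + 1 + c‖ := by
    have := half_le_norm_natCast_add (c := c) (n := n + 1) (by push_cast; linarith)
    push_cast at this
    linarith
  have hd0 : (n : 𝕜) + d ≠ 0 := norm_pos_iff.mp (by linarith)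
  have hc0 : (n : 𝕜) + 1 + c ≠ 0 := norm_pos_iff.mp (by linarith)
  have key : ((n : 𝕜) + c) / ((n : 𝕜) + d) * (((n : 𝕜) + 1 + d) / ((n : 𝕜) + 1 + c)) - 1 =
      (c - d) / (((n : 𝕜) + d) * ((n : 𝕜) + 1 + c)) := by
    field_simp
    ring
  calc _ = ‖c - d‖ / (‖(n : 𝕜) + d‖ * ‖(n : 𝕜) + 1 + c‖) := by rw [key, norm_div, norm_mul]
    _ ≤ ‖c - d‖ / ((n / 2) * (n / 2)) := by gcongr
    _ = 4 * ‖c - d‖ / (n : ℝ) ^ 2 := by ring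

lemma summable_norm_tmRatio_pair_sub_one (a b : 𝕜) :
    Summable fun k : ℕ =>
      ‖tmRatio a b (2 * (k + 1)) * tmRatio a b (2 * (k + 1) + 1) - 1‖ := by
  have hs : Summable fun k : ℕ => ‖a - b‖ * (1 / ((k + 1 : ℕ) : ℝ) ^ 2) :=
    ((summable_nat_add_iff 1).mpr (Real.summable_one_div_nat_pow.mpr one_lt_two)).mul_left _
  refine hs.of_norm_bounded_eventually ?_
  rw [Nat.cofinite_eq_atTop]
  filter_upwards [eventually_ge_atTop ⌈‖a‖ + ‖b‖⌉₊] with k hk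
  have hk' : ‖a‖ + ‖b‖ ≤ k := Nat.ceil_le.mp hk
  have ha : 2 * ‖a‖ ≤ ((2 * (k + 1) : ℕ) : ℝ) := by push_cast; linarith [norm_nonneg b]
  have hb : 2 * ‖b‖ ≤ ((2 * (k + 1) : ℕ) : ℝ) := by push_cast; linarith [norm_nonneg a]
  have hbound : 4 * ‖a - b‖ / ((2 * (k + 1) : ℕ) : ℝ) ^ 2 =
      ‖a - b‖ * (1 / ((k + 1 : ℕ) : ℝ) ^ 2) := by
    push_cast
    field_simp
    ring
  rw [norm_norm, ← hbound]
  rcases tmRatio_two_mul_mul_tmRatio_two_mul_add_one a b (k + 1) with h | h <;> rw [h]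
  · exact_mod_cast norm_div_mul_div_sub_one_le (by omega) ha hb
  · rw [norm_sub_rev a b]
    exact_mod_cast norm_div_mul_div_sub_one_le (by omega) hb ha

lemma tendsto_tmRatio (a b : 𝕜) : Tendsto (tmRatio a b) atTop (𝓝 1) := by
  have h := tendsto_add_mul_div_add_mul_atTop_nhds a b 1 one_ne_zero
  simp only [one_mul, div_one, add_comm a, add_comm b] at h
  exact h.zpow_neg_one_pow tm

lemma exists_tendsto_prod_range_tmRatio_ne_zero {a b : 𝕜}
    (ha : ∀ k : ℕ, a ≠ -((k : 𝕜) + 1)) (hb : ∀ k : ℕ, b ≠ -((k : 𝕜) + 1)) :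
    ∃ L ≠ 0, Tendsto (fun M => ∏ j ∈ range M, tmRatio a b (j + 2)) atTop (𝓝 L) := by
  obtain ⟨L, hL, hpairs⟩ := exists_tendsto_prod_range_ne_zero
    (fun k => mul_ne_zero (tmRatio_ne_zero ha hb (2 * k + 1)) (tmRatio_ne_zero ha hb (2 * k + 2)))
    (summable_norm_tmRatio_pair_sub_one a b)
  have heven : Tendsto (fun M => ∏ j ∈ range (2 * M), tmRatio a b (j + 2)) atTop (𝓝 L) := by
    simpa only [prod_range_two_mul, mul_add_one, add_right_comm _ 1 2] using hpairs
  refine ⟨L, hL, tendsto_of_tendsto_two_mul_of_tendsto_two_mul_add_one heven ?_⟩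
  have hlast : Tendsto (fun M => tmRatio a b (2 * M + 2)) atTop (𝓝 1) :=
    (tendsto_tmRatio a b).comp
      (tendsto_atTop_mono (fun M => (by omega : M ≤ 2 * M + 2)) tendsto_id)
  simpa only [prod_range_succ, mul_one] using heven.mul hlast

end RCLike

theorem prod_general_identity (a b : ℂ)
    (ha : ∀ k : ℕ, a ≠ -((k : ℂ) + 1)) (hb : ∀ k : ℕ, b ≠ -((k : ℂ) + 1)) :
    Tendsto (fun N => ∏ n ∈ Finset.range N,
        (((((n : ℂ) + 1) + a) * (2 * ((n : ℂ) + 1) + a + 1) * (2 * ((n : ℂ) + 1) + b)) /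
          ((2 * ((n : ℂ) + 1) + a) * (((n : ℂ) + 1) + b) * (2 * ((n : ℂ) + 1) + b + 1)))
          ^ ((-1 : ℤ) ^ tm (n + 1)))
      atTop (𝓝 ((b + 1) / (a + 1))) := by
  obtain ⟨L, hL, hR⟩ := exists_tendsto_prod_range_tmRatio_ne_zero ha hb
  have hQ : Tendsto (fun N => ∏ n ∈ range N, tmRatio a b (n + 1)) atTop
      (𝓝 (L * tmRatio a b 1)) := by
    refine (tendsto_add_atTop_iff_nat 1).mp ?_
    simpa only [prod_range_succ'] using hR.mul_const (tmRatio a b 1)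
  have hR₂ : Tendsto (fun N => ∏ j ∈ range (2 * N), tmRatio a b (j + 2)) atTop (𝓝 L) :=
    hR.comp (tendsto_atTop_mono (fun N => (by omega : N ≤ 2 * N)) tendsto_id)
  simpa only [prod_tm_factor_eq, Pi.div_def, mul_div_cancel_left₀ _ hL, tmRatio_one] using
    hQ.div hR₂ hL
end
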